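/- Let R' be a K'-graded ring, ψ: K' → K a group epimorphism, and χ: ker(ψ) → R'^{+,*} a group homomorphism with χ(w') ∈ R'_{w'} for all w' ∈ ker(ψ). Then the quotient map R' → R'/⟨1 - χ(w') : w' ∈ ker(ψ)⟩ is a component-wise isomorphic epimorphism with respect to the induced K-grading on the quotient. -/

import Mathlib

/-!
For `w' : K'` let `π_{w'} : R' → R'` be the additive map sending a homogeneous `x` of degree `v'`
to `χ (w' - v') * x` when `ψ v' = ψ w'` and to `0` otherwise. It is the identity on `R'_{w'}`, and
multiplicativity of `χ` on `ker ψ` gives `π_{w'} (r * χ u) = π_{w'} r`, so `π_{w'}` kills the ideal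
`⟨1 - χ u⟩`; hence the quotient map is injective on `R'_{w'}`. Surjectivity onto the degree `ψ w'`
part holds because a homogeneous `y` of degree `v'` in the same fibre has the same image as
`χ (w' - v') * y ∈ R'_{w'}`.
-/

namespace GradedRing

def identifyingIdeal {K' K R' : Type*} [AddCommGroup K'] [AddCommGroup K] [CommRing R']
    (ψ : K' →+ K) (χ : K' → R') : Ideal R' :=
  Ideal.span {x : R' | ∃ w' : K', ψ w' = 0 ∧ x = 1 - χ w'}

theorem mk_identifyingIdeal_eq_one {K' K R' : Type*} [AddCommGroup K'] [AddCommGroup K]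
    [CommRing R'] {ψ : K' →+ K} {χ : K' → R'} {u : K'} (hu : ψ u = 0) :
    Ideal.Quotient.mk (identifyingIdeal ψ χ) (χ u) = 1 :=
  (Ideal.Quotient.eq.mpr (Ideal.subset_span ⟨u, hu, rfl⟩ : 1 - χ u ∈ identifyingIdeal ψ χ)).symm

section FiberProjection

variable {K' K R' : Type*} [AddCommGroup K'] [DecidableEq K'] [AddCommGroup K] [CommRing R']
  (𝒜' : K' → AddSubgroup R') [GradedRing 𝒜'] (ψ : K' →+ K) (χ : K' → R')

open scoped Classical in
noncomputable def fiberProjection (w' : K') : R' →+ R' :=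
  (DirectSum.toAddMonoid fun v' =>
      if ψ v' = ψ w' then (AddMonoidHom.mulLeft (χ (w' - v'))).comp (𝒜' v').subtype else 0).comp
    (DirectSum.decomposeAddEquiv 𝒜').toAddMonoidHom

theorem fiberProjection_apply_of_mem {w' v' : K'} {x : R'} (hx : x ∈ 𝒜' v')
    (h : ψ v' = ψ w') : fiberProjection 𝒜' ψ χ w' x = χ (w' - v') * x := by
  simp [fiberProjection, DirectSum.decompose_of_mem 𝒜' hx, h]

theorem fiberProjection_apply_of_mem_of_ne {w' v' : K'} {x : R'} (hx : x ∈ 𝒜' v')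
    (h : ψ v' ≠ ψ w') : fiberProjection 𝒜' ψ χ w' x = 0 := by
  simp [fiberProjection, DirectSum.decompose_of_mem 𝒜' hx, h]

theorem fiberProjection_apply_of_mem_self (hχzero : χ 0 = 1) {w' : K'} {x : R'}
    (hx : x ∈ 𝒜' w') : fiberProjection 𝒜' ψ χ w' x = x := by
  rw [fiberProjection_apply_of_mem 𝒜' ψ χ hx rfl, sub_self, hχzero, one_mul]

variable {𝒜' ψ χ}

theorem fiberProjection_mul_of_mem_ker (hχ : ∀ u : K', ψ u = 0 → χ u ∈ 𝒜' u)
    (hχadd : ∀ w v : K', ψ w = 0 → ψ v = 0 → χ (w + v) = χ w * χ v)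
    (w' : K') {u : K'} (hu : ψ u = 0) (r : R') :
    fiberProjection 𝒜' ψ χ w' (r * χ u) = fiberProjection 𝒜' ψ χ w' r := by
  induction r using DirectSum.Decomposition.inductionOn 𝒜' with
  | zero => simp
  | add x y hx hy => rw [add_mul, map_add, hx, hy, map_add]
  | @homogeneous v' x =>
    obtain ⟨x, hx⟩ := x
    have hxu : x * χ u ∈ 𝒜' (v' + u) := SetLike.mul_mem_graded hx (hχ u hu)
    have hfiber : ψ (v' + u) = ψ v' := by rw [map_add, hu, add_zero]
    by_cases h : ψ v' = ψ w'
    · rw [fiberProjection_apply_of_mem 𝒜' ψ χ hxu (hfiber.trans h),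
        fiberProjection_apply_of_mem 𝒜' ψ χ hx h]
      have hker : ψ (w' - (v' + u)) = 0 := by simp [h, hu]
      have hsplit : χ (w' - v') = χ (w' - (v' + u)) * χ u := by
        rw [← hχadd _ _ hker hu, sub_add_eq_sub_sub, sub_add_cancel]
      rw [hsplit]
      ring
    · rw [fiberProjection_apply_of_mem_of_ne 𝒜' ψ χ hxu (hfiber ▸ h),
        fiberProjection_apply_of_mem_of_ne 𝒜' ψ χ hx h]

theorem fiberProjection_eq_zero_of_mem_identifyingIdeal
    (hχ : ∀ u : K', ψ u = 0 → χ u ∈ 𝒜' u)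
    (hχadd : ∀ w v : K', ψ w = 0 → ψ v = 0 → χ (w + v) = χ w * χ v)
    (w' : K') {x : R'} (hx : x ∈ identifyingIdeal ψ χ) :
    fiberProjection 𝒜' ψ χ w' x = 0 := by
  suffices ∀ r : R', fiberProjection 𝒜' ψ χ w' (r * x) = 0 by simpa using this 1
  induction hx using Submodule.span_induction with
  | mem s hs =>
    obtain ⟨u, hu, rfl⟩ := hs
    intro r
    rw [mul_sub, mul_one, map_sub, fiberProjection_mul_of_mem_ker hχ hχadd w' hu, sub_self]
  | zero => simp
  | add a b _ _ ha hb => intro r; rw [mul_add, map_add, ha r, hb r, add_zero]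
  | smul c a _ ha => intro r; rw [smul_eq_mul, ← mul_assoc, ha]

theorem injOn_mk_identifyingIdeal (hχ : ∀ u : K', ψ u = 0 → χ u ∈ 𝒜' u)
    (hχadd : ∀ w v : K', ψ w = 0 → ψ v = 0 → χ (w + v) = χ w * χ v) (hχzero : χ 0 = 1)
    (w' : K') : Set.InjOn (Ideal.Quotient.mk (identifyingIdeal ψ χ)) (𝒜' w') := by
  intro x hx y hy hxy
  have hsub := fiberProjection_eq_zero_of_mem_identifyingIdeal hχ hχadd w'
    (Ideal.Quotient.eq.mp hxy)
  rwa [map_sub, fiberProjection_apply_of_mem_self 𝒜' ψ χ hχzero hx,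
    fiberProjection_apply_of_mem_self 𝒜' ψ χ hχzero hy, sub_eq_zero] at hsub

end FiberProjection

section Quotient

variable {K' K R' : Type*} [AddCommGroup K'] [AddCommGroup K] [CommRing R']
  {𝒜' : K' → AddSubgroup R'} [SetLike.GradedMul 𝒜'] {ψ : K' →+ K} {χ : K' → R'}

theorem closure_mk_fiber_le_map_mk (hχ : ∀ u : K', ψ u = 0 → χ u ∈ 𝒜' u) (w' : K') :
    AddSubgroup.closure (Ideal.Quotient.mk (identifyingIdeal ψ χ) ''
        ⋃ v' ∈ {v' : K' | ψ v' = ψ w'}, (𝒜' v' : Set R')) ≤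
      (𝒜' w').map (Ideal.Quotient.mk (identifyingIdeal ψ χ)).toAddMonoidHom := by
  rw [AddSubgroup.closure_le]
  rintro _ ⟨y, hy, rfl⟩
  obtain ⟨v', hv', hyv⟩ := Set.mem_iUnion₂.mp hy
  have hker : ψ (w' - v') = 0 := by simp [map_sub, Set.mem_ofPred_eq.mp hv']
  refine ⟨χ (w' - v') * y, ?_, ?_⟩
  · simpa using SetLike.mul_mem_graded (hχ _ hker) hyv
  · simp [mk_identifyingIdeal_eq_one hker]

end Quotient

end GradedRing

open GradedRing in
theorem stmt_9 {K' K R' : Type*} [AddCommGroup K'] [DecidableEq K'] [AddCommGroup K]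
    [CommRing R']
    (𝒜' : K' → AddSubgroup R') [GradedRing 𝒜'] (ψ : K' →+ K)
    (χ : K' → R')
    (hχ : ∀ w' : K', ψ w' = 0 → χ w' ∈ 𝒜' w' ∧ IsUnit (χ w'))
    (hχadd : ∀ w v : K', ψ w = 0 → ψ v = 0 → χ (w + v) = χ w * χ v)
    (hχzero : χ 0 = 1) :
    letI I : Ideal R' := Ideal.span {x : R' | ∃ w' : K', ψ w' = 0 ∧ x = 1 - χ w'}
    letI ℬ : K → AddSubgroup (R' ⧸ I) := fun w =>
      AddSubgroup.closure ((Ideal.Quotient.mk I) '' (⋃ w' ∈ {w' : K' | ψ w' = w}, (𝒜' w' : Set R')))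
    Function.Surjective (Ideal.Quotient.mk I) ∧
      ∀ w' : K', Set.BijOn (Ideal.Quotient.mk I) (𝒜' w' : Set R') (ℬ (ψ w') : Set (R' ⧸ I)) := by
  have hχ_mem : ∀ u : K', ψ u = 0 → χ u ∈ 𝒜' u := fun u hu => (hχ u hu).1
  refine ⟨Ideal.Quotient.mk_surjective, fun w' => ⟨?_, ?_, ?_⟩⟩
  · exact fun x hx => AddSubgroup.subset_closure ⟨x, Set.mem_biUnion rfl hx, rfl⟩
  · exact injOn_mk_identifyingIdeal hχ_mem hχadd hχzero w'
  · intro q hq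
    obtain ⟨x, hx, rfl⟩ := closure_mk_fiber_le_map_mk hχ_mem w' hq
    exact ⟨x, hx, rfl⟩
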